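/- Under the hypotheses of the singularity criterion (0 < α < 1/2, q : ℤ_{≥0} → ℤ_{>0} with q(0)=1, q(s₁)q(s₂−1) < q(s₁+s₂) ≤ q(s₁)q(s₂), q(s+1)α^{s+2} < q(s)α^{s+1} < Σ_{i=s+2}^∞ q(i−1)α^i, and Σ_{i=1}^∞ q(i−1)α^i = 1), the function f(x) = Σ_{i=1}^∞ x_i·r(x)_i·α^i (with r(x)_i = Π_s q(s)^{p_{i,s}} counting runs of 1s in the first i−1 binary digits) is continuous on [0,1]. -/

import Mathlib

/-!
Write `τ n = ∑_{i ≥ n} q(i) α^(i+1)` for the tails of the series `∑ q(i) α^(i+1) = 1`. The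
hypotheses on `q` give `q(m) q(n) ≤ q(m + n + 1)`, and hence `r(x)_(i+1) ≤ q(i)`: a maximal run
closing at digit `i` multiplies the weight of the digits before it by `q` of its length. So the
series defining `f` is dominated termwise by `∑ q(i) α^(i+1)`, and two points with the same first
`n` binary digits have values within `τ n` of each other. This gives continuity from the right
everywhere and continuity at non-dyadic points.

Just below a dyadic point `x = K / 2^j` (`K` odd) the digits `⋯ 1 0 0 ⋯` of `x` turn into
`⋯ 0 1 1 ⋯ 1` up to a position `m`. The block of ones contributes `r(x)_j α^j (1 - τ (m - j))`,
which replaces the last term `r(x)_j α^j` of `f x` up to a tail, so `f` is continuous from the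
left at `x` as well; at `x = 1`, where `f 1 = 1`, the same computation applies with all digits
equal to one.
-/

/-- The `i`-th binary digit of `x` (indices from 1), using the terminating
(floor) expansion at dyadic rationals. -/
noncomputable def binDigit (x : ℝ) (i : ℕ) : ℕ := ⌊x * 2 ^ i⌋.toNat % 2

/-- `runCount b i s`: the number of maximal runs of exactly `s` consecutive 1s
among the digits `b 1, …, b (i-1)`. -/
def runCount (b : ℕ → ℕ) (i s : ℕ) : ℕ :=
  ((Finset.Icc 1 i).filter fun m =>
    m + s ≤ i ∧ (∀ t ∈ Finset.Ico m (m + s), b t = 1) ∧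
      (m = 1 ∨ b (m - 1) = 0) ∧ (m + s = i ∨ b (m + s) = 0)).card

/-- `r(x)_i = Π_s q(s)^{p_{i,s}}` where `p_{i,s}` counts maximal runs of `s`
consecutive 1s among the first `i-1` binary digits (`q 0 = 1`, so the factor
`s = 0` is omitted). -/
noncomputable def rWeight (q : ℕ → ℕ) (b : ℕ → ℕ) (i : ℕ) : ℝ :=
  ∏ s ∈ Finset.Icc 1 i, (q s : ℝ) ^ runCount b i s

/-- `f(x) = Σ_{i≥1} x_i · r(x)_i · α^i` (with `f 1 = 1`, corresponding to the
all-ones expansion of `1`). -/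
noncomputable def fCA (α : ℝ) (q : ℕ → ℕ) (x : ℝ) : ℝ :=
  if x = 1 then 1 else
    ∑' i : ℕ, (binDigit x (i + 1) : ℝ) * rWeight q (binDigit x) (i + 1) * α ^ (i + 1)

open Finset Filter Topology

section Runs

variable {b c : ℕ → ℕ} {a i s : ℕ}

theorem runCount_congr (h : ∀ t, 1 ≤ t → t < i → b t = c t) (s : ℕ) :
    runCount b i s = runCount c i s := by
  unfold runCount
  congr 1
  ext m
  simp only [mem_filter, mem_Icc, mem_Ico]
  grind

theorem runCount_eq_zero_of_le (h : i ≤ s) : runCount b i s = 0 := by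
  rw [runCount, card_eq_zero, filter_eq_empty_iff]
  intro m hm
  rw [mem_Icc] at hm
  omega

theorem runCount_succ_of_eq_zero (h0 : b i = 0) (hs : 1 ≤ s) :
    runCount b (i + 1) s = runCount b i s := by
  unfold runCount
  congr 1
  ext m
  simp only [mem_filter, mem_Icc, mem_Ico]
  grind

theorem runCount_succ_of_run (ha : 1 ≤ a) (hai : a ≤ i) (hleft : a = 1 ∨ b (a - 1) = 0)
    (hones : ∀ t, a ≤ t → t ≤ i → b t = 1) (hs : 1 ≤ s) :
    runCount b (i + 1) s = runCount b a s + if s = i + 1 - a then 1 else 0 := by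
  unfold runCount
  split_ifs with hsa
  · rw [← card_insert_of_notMem (s := filter _ _) (a := a) (by simp; omega)]
    congr 1
    ext m
    simp only [mem_filter, mem_insert, mem_Icc, mem_Ico]
    grind
  · rw [add_zero]
    congr 1
    ext m
    simp only [mem_filter, mem_Icc, mem_Ico]
    grind

theorem exists_run_start (hb : ∀ t, b t ≤ 1) :
    ∀ i, 1 ≤ i → b i = 1 →
      ∃ a, 1 ≤ a ∧ a ≤ i ∧ (a = 1 ∨ b (a - 1) = 0) ∧ ∀ t, a ≤ t → t ≤ i → b t = 1
  | 0, hi, _ => absurd hi (by omega)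
  | i + 1, _, h1 => by
    by_cases hprev : 1 ≤ i ∧ b i = 1
    · obtain ⟨a, ha, hai, hleft, hones⟩ := exists_run_start hb i hprev.1 hprev.2
      refine ⟨a, ha, by omega, hleft, fun t hat hti => ?_⟩
      rcases Nat.lt_or_ge t (i + 1) with ht | ht
      · exact hones t hat (by omega)
      · rwa [show t = i + 1 by omega]
    · refine ⟨i + 1, by omega, le_rfl, ?_, fun t hat hti => by rwa [show t = i + 1 by omega]⟩
      have := hb i
      grind

end Runs

section Weights

variable (q : ℕ → ℕ) {b c : ℕ → ℕ} {a i : ℕ}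

theorem rWeight_nonneg (b : ℕ → ℕ) (i : ℕ) : 0 ≤ rWeight q b i :=
  prod_nonneg fun _ _ => by positivity

theorem rWeight_congr (h : ∀ t, 1 ≤ t → t < i → b t = c t) : rWeight q b i = rWeight q c i :=
  prod_congr rfl fun s _ => by rw [runCount_congr h]

theorem rWeight_eq_prod_Icc (b : ℕ → ℕ) {n : ℕ} (hin : i ≤ n) :
    rWeight q b i = ∏ s ∈ Icc 1 n, (q s : ℝ) ^ runCount b i s :=
  prod_subset (Icc_subset_Icc_right hin) fun s hs hns => by
    rw [mem_Icc] at hs hns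
    rw [runCount_eq_zero_of_le (by omega), pow_zero]

theorem rWeight_one (b : ℕ → ℕ) : rWeight q b 1 = 1 :=
  prod_eq_one fun s hs => by rw [runCount_eq_zero_of_le (mem_Icc.1 hs).1, pow_zero]

theorem rWeight_succ_of_eq_zero (h0 : b i = 0) : rWeight q b (i + 1) = rWeight q b i := by
  rw [rWeight_eq_prod_Icc q b i.le_succ]
  exact prod_congr rfl fun s hs => by rw [runCount_succ_of_eq_zero h0 (mem_Icc.1 hs).1]

theorem rWeight_succ_of_run (ha : 1 ≤ a) (hai : a ≤ i) (hleft : a = 1 ∨ b (a - 1) = 0)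
    (hones : ∀ t, a ≤ t → t ≤ i → b t = 1) :
    rWeight q b (i + 1) = rWeight q b a * q (i + 1 - a) := by
  have hrun : ∀ s ∈ Icc 1 (i + 1), (q s : ℝ) ^ runCount b (i + 1) s =
      (q s : ℝ) ^ runCount b a s * if s = i + 1 - a then (q s : ℝ) else 1 := fun s hs => by
    rw [runCount_succ_of_run ha hai hleft hones (mem_Icc.1 hs).1, pow_add]
    split_ifs <;> simp
  rw [rWeight, prod_congr rfl hrun, prod_mul_distrib, prod_ite_eq',
    if_pos (mem_Icc.2 ⟨by omega, by omega⟩), rWeight_eq_prod_Icc q b (by omega : a ≤ i + 1)]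

theorem monotone_of_mul_le (hq0 : q 0 = 1) (hsuper : ∀ m n, q m * q n ≤ q (m + n + 1)) :
    Monotone q :=
  monotone_nat_of_le_succ fun n => by simpa [hq0] using hsuper 0 n

theorem rWeight_succ_le (hq0 : q 0 = 1) (hsuper : ∀ m n, q m * q n ≤ q (m + n + 1))
    (hb : ∀ t, b t ≤ 1) (i : ℕ) : rWeight q b (i + 1) ≤ q i := by
  induction i using Nat.strong_induction_on with
  | _ i ih =>
  rcases Nat.eq_zero_or_pos i with rfl | hi
  · simp [rWeight_one, hq0]
  rcases (hb i).lt_or_eq with h0 | h1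
  · obtain ⟨j, rfl⟩ : ∃ j, i = j + 1 := ⟨i - 1, by omega⟩
    rw [rWeight_succ_of_eq_zero q (by omega)]
    exact (ih j (by omega)).trans (by exact_mod_cast monotone_of_mul_le q hq0 hsuper j.le_succ)
  obtain ⟨a, ha, hai, hleft, hones⟩ := exists_run_start hb i hi h1
  rw [rWeight_succ_of_run q ha hai hleft hones]
  obtain rfl | ha2 := ha.eq_or_lt
  · simp [rWeight_one]
  obtain ⟨j, rfl⟩ : ∃ j, a = j + 2 := ⟨a - 2, by omega⟩
  have hprefix : rWeight q b (j + 2) ≤ q j := by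
    rw [rWeight_succ_of_eq_zero q (by simpa using hleft.resolve_left (by omega))]
    exact ih j (by omega)
  calc rWeight q b (j + 2) * q (i + 1 - (j + 2)) ≤ q j * q (i + 1 - (j + 2)) := by gcongr
    _ ≤ q i := by exact_mod_cast (hsuper _ _).trans_eq (by congr 1; omega)

end Weights

theorem mul_le_of_mul_pred_lt {q : ℕ → ℕ} (hq0 : q 0 = 1) (hq1 : 0 < q 1)
    (hq : ∀ s₁ s₂ : ℕ, 0 < s₁ → 0 < s₂ → q s₁ * q (s₂ - 1) < q (s₁ + s₂)) (m n : ℕ) :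
    q m * q n ≤ q (m + n + 1) := by
  rcases Nat.eq_zero_or_pos m with rfl | hm
  · rcases Nat.eq_zero_or_pos n with rfl | hn
    · simpa [hq0] using Nat.succ_le_of_lt hq1
    · simpa [hq0, add_comm] using (hq n 1 hn one_pos).le
  · simpa [add_assoc] using (hq m (n + 1) hm n.succ_pos).le

section Series

variable {α : ℝ} {q : ℕ → ℕ} {b c : ℕ → ℕ}

noncomputable def fTerm (α : ℝ) (q b : ℕ → ℕ) (i : ℕ) : ℝ :=
  b (i + 1) * rWeight q b (i + 1) * α ^ (i + 1)

noncomputable def fSeries (α : ℝ) (q b : ℕ → ℕ) : ℝ :=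
  ∑' i, fTerm α q b i

noncomputable def qTail (α : ℝ) (q : ℕ → ℕ) (n : ℕ) : ℝ :=
  ∑' i, (q (i + n) : ℝ) * α ^ (i + n + 1)

theorem fCA_of_ne_one {x : ℝ} (hx : x ≠ 1) : fCA α q x = fSeries α q (binDigit x) :=
  if_neg hx

theorem fTerm_nonneg (hα : 0 ≤ α) (i : ℕ) : 0 ≤ fTerm α q b i := by
  have := rWeight_nonneg q b (i + 1)
  unfold fTerm
  positivity

theorem fTerm_le (hα : 0 ≤ α) (hq0 : q 0 = 1) (hsuper : ∀ m n, q m * q n ≤ q (m + n + 1))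
    (hb : ∀ t, b t ≤ 1) (i : ℕ) : fTerm α q b i ≤ q i * α ^ (i + 1) := by
  have hr := rWeight_succ_le q hq0 hsuper hb i
  have hr0 := rWeight_nonneg q b (i + 1)
  have hbi : (b (i + 1) : ℝ) ≤ 1 := by exact_mod_cast hb (i + 1)
  calc fTerm α q b i ≤ 1 * q i * α ^ (i + 1) := by
        unfold fTerm
        gcongr
    _ = q i * α ^ (i + 1) := by rw [one_mul]

theorem fTerm_congr {i : ℕ} (h : ∀ t, 1 ≤ t → t ≤ i + 1 → b t = c t) :
    fTerm α q b i = fTerm α q c i := by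
  rw [fTerm, fTerm, h (i + 1) (by omega) le_rfl, rWeight_congr q fun t h1 h2 => h t h1 h2.le]

theorem summable_fTerm (hα : 0 ≤ α) (hq0 : q 0 = 1)
    (hsuper : ∀ m n, q m * q n ≤ q (m + n + 1)) (hb : ∀ t, b t ≤ 1)
    (hsum : Summable fun i => (q i : ℝ) * α ^ (i + 1)) : Summable (fTerm α q b) :=
  hsum.of_nonneg_of_le (fTerm_nonneg hα) (fTerm_le hα hq0 hsuper hb)

theorem qTail_nonneg (hα : 0 ≤ α) (n : ℕ) : 0 ≤ qTail α q n :=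
  tsum_nonneg fun _ => by positivity

theorem tendsto_qTail : Tendsto (qTail α q) atTop (𝓝 0) :=
  tendsto_sum_nat_add fun i => (q i : ℝ) * α ^ (i + 1)

theorem sum_range_add_qTail {Q : ℝ} (hQ : HasSum (fun i => (q i : ℝ) * α ^ (i + 1)) Q) (n : ℕ) :
    ∑ i ∈ range n, (q i : ℝ) * α ^ (i + 1) + qTail α q n = Q :=
  hQ.tsum_eq ▸ hQ.summable.sum_add_tsum_nat_add n

theorem fSeries_sub_sum_range_mem_Icc (hα : 0 ≤ α) (hq0 : q 0 = 1)
    (hsuper : ∀ m n, q m * q n ≤ q (m + n + 1)) (hb : ∀ t, b t ≤ 1)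
    (hsum : Summable fun i => (q i : ℝ) * α ^ (i + 1)) (n : ℕ) :
    fSeries α q b - ∑ i ∈ range n, fTerm α q b i ∈ Set.Icc 0 (qTail α q n) := by
  have hs := summable_fTerm hα hq0 hsuper hb hsum
  rw [fSeries, ← hs.sum_add_tsum_nat_add n, add_sub_cancel_left]
  exact ⟨tsum_nonneg fun _ => fTerm_nonneg hα _,
    ((summable_nat_add_iff n).2 hs).tsum_le_tsum (fun i => fTerm_le hα hq0 hsuper hb (i + n))
      ((summable_nat_add_iff n).2 hsum)⟩

theorem fSeries_eq_sum_range {n : ℕ} (h : ∀ t, n < t → b t = 0) :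
    fSeries α q b = ∑ i ∈ range n, fTerm α q b i :=
  tsum_eq_sum fun i hi => by
    rw [fTerm, h (i + 1) (by simp at hi; omega)]
    simp

theorem sum_Ico_fTerm_of_run (hq0 : q 0 = 1) {j m : ℕ} (hjm : j ≤ m) (hj : j = 0 ∨ c j = 0)
    (hones : ∀ t, j < t → t ≤ m → c t = 1) :
    ∑ i ∈ Ico j m, fTerm α q c i =
      rWeight q c (j + 1) * α ^ j * ∑ i ∈ range (m - j), (q i : ℝ) * α ^ (i + 1) := by
  rw [sum_Ico_eq_sum_range, mul_sum]
  refine sum_congr rfl fun t ht => ?_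
  rw [mem_range] at ht
  have hr : rWeight q c (j + t + 1) = rWeight q c (j + 1) * q t := by
    rcases Nat.eq_zero_or_pos t with rfl | ht0
    · simp [hq0]
    · rw [rWeight_succ_of_run q (a := j + 1) (i := j + t) (by omega) (by omega) (by simpa using hj)
        fun u h1 h2 => hones u (by omega) (by omega)]
      congr 3
      omega
  rw [fTerm, hones (j + t + 1) (by omega) (by omega), hr]
  push_cast
  ring

theorem abs_fSeries_sub_le_of_eqOn (hα : 0 ≤ α) (hq0 : q 0 = 1)
    (hsuper : ∀ m n, q m * q n ≤ q (m + n + 1)) (hb : ∀ t, b t ≤ 1) (hc : ∀ t, c t ≤ 1)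
    (hsum : Summable fun i => (q i : ℝ) * α ^ (i + 1)) {n : ℕ}
    (h : ∀ t, 1 ≤ t → t ≤ n → b t = c t) :
    |fSeries α q c - fSeries α q b| ≤ qTail α q n := by
  have hB := fSeries_sub_sum_range_mem_Icc hα hq0 hsuper hb hsum n
  have hC := fSeries_sub_sum_range_mem_Icc hα hq0 hsuper hc hsum n
  rw [sum_congr rfl fun i hi => fTerm_congr fun t h1 h2 => h t h1 (by simp at hi; omega)] at hB
  rw [abs_le]
  constructor <;> linarith [hB.1, hB.2, hC.1, hC.2]

theorem abs_fSeries_sub_one_le (hα : 0 ≤ α) (hq0 : q 0 = 1)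
    (hsuper : ∀ m n, q m * q n ≤ q (m + n + 1)) (hc : ∀ t, c t ≤ 1)
    (hQ : HasSum (fun i => (q i : ℝ) * α ^ (i + 1)) 1) {n : ℕ}
    (hones : ∀ t, 1 ≤ t → t ≤ n → c t = 1) :
    |fSeries α q c - 1| ≤ qTail α q n := by
  have hC := fSeries_sub_sum_range_mem_Icc hα hq0 hsuper hc hQ.summable n
  have hP := sum_Ico_fTerm_of_run (α := α) hq0 n.zero_le (Or.inl rfl) hones
  rw [← range_eq_Ico, rWeight_one, Nat.sub_zero, pow_zero, one_mul, one_mul] at hP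
  have hT := sum_range_add_qTail hQ n
  rw [abs_le]
  constructor <;> linarith [hC.1, hC.2, qTail_nonneg (q := q) hα n]

theorem abs_fSeries_sub_le_of_dyadic (hα : 0 ≤ α) (hq0 : q 0 = 1)
    (hsuper : ∀ m n, q m * q n ≤ q (m + n + 1)) (hc : ∀ t, c t ≤ 1)
    (hQ : HasSum (fun i => (q i : ℝ) * α ^ (i + 1)) 1) {j m : ℕ} (hj : 1 ≤ j) (hjm : j ≤ m)
    (hagree : ∀ t, 1 ≤ t → t < j → b t = c t) (hbj : b j = 1) (hbz : ∀ t, j < t → b t = 0)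
    (hcj : c j = 0) (hc1 : ∀ t, j < t → t ≤ m → c t = 1) :
    |fSeries α q c - fSeries α q b| ≤ qTail α q m + rWeight q b j * α ^ j * qTail α q (m - j) := by
  obtain ⟨J, rfl⟩ : ∃ J, j = J + 1 := ⟨j - 1, by omega⟩
  have hprefix : ∑ i ∈ range J, fTerm α q b i = ∑ i ∈ range J, fTerm α q c i :=
    sum_congr rfl fun i hi => fTerm_congr fun t h1 h2 => hagree t h1 (by simp at hi; omega)
  have hrc : rWeight q c (J + 1 + 1) = rWeight q b (J + 1) := by
    rw [rWeight_succ_of_eq_zero q hcj]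
    exact (rWeight_congr q hagree).symm
  have hB : fSeries α q b = ∑ i ∈ range J, fTerm α q b i + rWeight q b (J + 1) * α ^ (J + 1) := by
    rw [fSeries_eq_sum_range hbz, sum_range_succ, fTerm, hbj]
    simp
  have hCm : ∑ i ∈ range m, fTerm α q c i = ∑ i ∈ range J, fTerm α q b i +
      rWeight q b (J + 1) * α ^ (J + 1) * (1 - qTail α q (m - (J + 1))) := by
    rw [← sum_range_add_sum_Ico _ hjm, sum_range_succ,
      sum_Ico_fTerm_of_run hq0 hjm (Or.inr hcj) hc1, hrc, hprefix, ← sum_range_add_qTail hQ (m - (J + 1)), fTerm, hcj]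
    simp
  have hC := fSeries_sub_sum_range_mem_Icc hα hq0 hsuper hc hQ.summable m
  have hRT := mul_nonneg (mul_nonneg (rWeight_nonneg q b (J + 1)) (pow_nonneg hα (J + 1)))
    (qTail_nonneg (q := q) hα (m - (J + 1)))
  rw [abs_le]
  constructor <;> nlinarith [hC.1, hC.2]

end Series

section Digits

variable {x y : ℝ} {i j m n : ℕ} {K : ℤ}

theorem binDigit_le_one (x : ℝ) (i : ℕ) : binDigit x i ≤ 1 :=
  Nat.le_of_lt_succ (Nat.mod_lt _ two_pos)

theorem floor_mul_two_pow_of_le (x : ℝ) (hin : i ≤ n) :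
    ⌊x * 2 ^ i⌋ = ⌊x * 2 ^ n⌋ / 2 ^ (n - i) := by
  have h : x * 2 ^ i = x * 2 ^ n / ((2 ^ (n - i) : ℕ) : ℝ) := by
    rw [eq_div_iff (by positivity), Nat.cast_pow, Nat.cast_ofNat, mul_assoc, ← pow_add,
      Nat.add_sub_cancel' hin]
  rw [h, Int.floor_div_natCast]
  push_cast
  rfl

theorem binDigit_eq_of_floor_eq (h : ⌊y * 2 ^ n⌋ = ⌊x * 2 ^ n⌋) (hin : i ≤ n) :
    binDigit y i = binDigit x i := by
  rw [binDigit, binDigit, floor_mul_two_pow_of_le y hin, floor_mul_two_pow_of_le x hin, h]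

theorem binDigit_eq_one_of_dyadic (hK : x * 2 ^ j = K) (hKodd : Odd K) (hKpos : 0 < K) :
    binDigit x j = 1 := by
  rw [binDigit, hK, Int.floor_intCast]
  have := Int.odd_iff.1 hKodd
  omega

theorem binDigit_eq_zero_of_dyadic (hK : x * 2 ^ j = K) (hji : j < i) : binDigit x i = 0 := by
  have hxi : x * 2 ^ i = ((2 * (K * 2 ^ (i - j - 1)) : ℤ) : ℝ) := by
    rw [← mul_left_comm, ← pow_succ', Nat.sub_add_cancel (by omega : 1 ≤ i - j)]
    push_cast
    rw [← hK, mul_assoc, ← pow_add, Nat.add_sub_cancel' hji.le]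
  rw [binDigit, hxi, Int.floor_intCast]
  omega

theorem floor_mul_two_pow_eq_sub_one (hK : x * 2 ^ j = K) (hji : j ≤ i) (him : i ≤ m)
    (hy : x - 1 / 2 ^ m ≤ y) (hyx : y < x) : ⌊y * 2 ^ i⌋ = K * 2 ^ (i - j) - 1 := by
  have hxi : x * 2 ^ i = K * 2 ^ (i - j) := by
    rw [← hK, mul_assoc, ← pow_add, Nat.add_sub_cancel' hji]
  have hgap : (2 : ℝ) ^ i / 2 ^ m ≤ 1 :=
    (div_le_one (by positivity)).2 (pow_le_pow_right₀ one_le_two him)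
  have hlow : x * 2 ^ i - 1 ≤ y * 2 ^ i := by
    have hscaled := mul_le_mul_of_nonneg_right hy (by positivity : (0 : ℝ) ≤ 2 ^ i)
    rw [sub_mul, one_div_mul_eq_div] at hscaled
    linarith
  have hup : y * 2 ^ i < x * 2 ^ i := mul_lt_mul_of_pos_right hyx (by positivity)
  rw [Int.floor_eq_iff]
  push_cast
  constructor <;> linarith

theorem binDigit_eq_one_of_left_of_dyadic (hK : x * 2 ^ j = K) (hKpos : 0 < K) (hji : j < i)
    (him : i ≤ m) (hy : x - 1 / 2 ^ m ≤ y) (hyx : y < x) : binDigit y i = 1 := by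
  rw [binDigit, floor_mul_two_pow_eq_sub_one hK hji.le him hy hyx,
    show i - j = i - j - 1 + 1 by omega, pow_succ, ← mul_assoc]
  have : 0 < K * 2 ^ (i - j - 1) := by positivity
  omega

theorem binDigit_eq_zero_of_left_of_dyadic (hK : x * 2 ^ j = K) (hKodd : Odd K) (hjm : j ≤ m)
    (hy : x - 1 / 2 ^ m ≤ y) (hyx : y < x) : binDigit y j = 0 := by
  rw [binDigit, floor_mul_two_pow_eq_sub_one hK le_rfl hjm hy hyx]
  have := Int.odd_iff.1 hKodd
  simp only [Nat.sub_self, pow_zero, mul_one]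
  omega

theorem floor_mul_two_pow_eq_of_left_of_dyadic (hK : x * 2 ^ (j + 1) = K) (hKodd : Odd K)
    (hjm : j + 1 ≤ m) (hy : x - 1 / 2 ^ m ≤ y) (hyx : y < x) :
    ⌊y * 2 ^ j⌋ = ⌊x * 2 ^ j⌋ := by
  rw [floor_mul_two_pow_of_le y (j.le_add_right 1), floor_mul_two_pow_of_le x (j.le_add_right 1),
    floor_mul_two_pow_eq_sub_one hK le_rfl hjm hy hyx, hK, Int.floor_intCast]
  have := Int.odd_iff.1 hKodd
  simp only [Nat.sub_self, pow_zero, mul_one, Nat.add_sub_cancel_left, pow_one]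
  omega

theorem exists_odd_of_mul_two_pow_eq (hx0 : 0 < x) (hx1 : x < 1) :
    ∀ {n : ℕ} {K : ℤ}, x * 2 ^ n = K → ∃ j, ∃ K' : ℤ, 1 ≤ j ∧ x * 2 ^ j = K' ∧ Odd K' ∧ 0 < K'
  | 0, K, hK => by
    rw [pow_zero, mul_one] at hK
    have h0 : (0 : ℝ) < K := hK ▸ hx0
    have h1 : (K : ℝ) < 1 := hK ▸ hx1
    norm_cast at h0 h1
    omega
  | n + 1, K, hK => by
    have hKpos : (0 : ℝ) < K := hK ▸ by positivity
    rcases K.even_or_odd with ⟨L, rfl⟩ | hKodd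
    · refine exists_odd_of_mul_two_pow_eq hx0 hx1 (n := n) (K := L) ?_
      push_cast at hK
      rw [pow_succ] at hK
      linarith
    · exact ⟨n + 1, K, by omega, hK, hKodd, by exact_mod_cast hKpos⟩

end Digits

theorem tendsto_of_forall_eventually_dist_le {X Y : Type*} [PseudoMetricSpace Y] {f : X → Y}
    {l : Filter X} {y : Y} {g : ℕ → ℝ} (hg : Tendsto g atTop (𝓝 0))
    (h : ∀ n, ∀ᶠ x in l, dist (f x) y ≤ g n) : Tendsto f l (𝓝 y) :=
  Metric.tendsto_nhds.2 fun ε hε => by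
    obtain ⟨n, hn⟩ := (hg.eventually (gt_mem_nhds hε)).exists
    exact (h n).mono fun x hx => hx.trans_lt hn

theorem eventually_floor_mul_eq_nhdsGE (x : ℝ) {c : ℝ} (hc : 0 ≤ c) :
    ∀ᶠ y in 𝓝[≥] x, ⌊y * c⌋ = ⌊x * c⌋ :=
  ((continuous_mul_const c).continuousWithinAt.tendsto_nhdsWithin
      fun _ (hy : x ≤ _) => mul_le_mul_of_nonneg_right hy hc).eventually
    (tendsto_pure.1 (tendsto_floor_right_pure_floor _))

theorem eventually_floor_mul_eq_nhds {x c : ℝ} (hx : ∀ k : ℤ, x * c ≠ k) :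
    ∀ᶠ y in 𝓝 x, ⌊y * c⌋ = ⌊x * c⌋ := by
  have hlt : (⌊x * c⌋ : ℝ) < x * c := (Int.floor_le _).lt_of_ne (hx _).symm
  have hmem : Set.Ioo (⌊x * c⌋ : ℝ) (⌊x * c⌋ + 1) ∈ 𝓝 (x * c) :=
    Ioo_mem_nhds hlt (Int.lt_floor_add_one _)
  filter_upwards [(continuous_mul_const c).continuousAt.preimage_mem_nhds hmem] with y hy
  exact Int.floor_eq_iff.2 ⟨hy.1.le, hy.2⟩

section Continuity

variable {α : ℝ} {q : ℕ → ℕ} {x : ℝ}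

theorem tendsto_fCA_of_eventually_floor_eq (hα : 0 ≤ α) (hq0 : q 0 = 1)
    (hsuper : ∀ m n, q m * q n ≤ q (m + n + 1))
    (hsum : Summable fun i => (q i : ℝ) * α ^ (i + 1)) {l : Filter ℝ} (hx : x ≠ 1)
    (h : ∀ n : ℕ, ∀ᶠ y in l, y ≠ 1 ∧ ⌊y * 2 ^ n⌋ = ⌊x * 2 ^ n⌋) :
    Tendsto (fCA α q) l (𝓝 (fCA α q x)) :=
  tendsto_of_forall_eventually_dist_le tendsto_qTail fun n => (h n).mono fun y ⟨hy, hfl⟩ => by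
    rw [Real.dist_eq, fCA_of_ne_one hy, fCA_of_ne_one hx]
    exact abs_fSeries_sub_le_of_eqOn hα hq0 hsuper (binDigit_le_one x) (binDigit_le_one y) hsum
      fun t _ ht => (binDigit_eq_of_floor_eq hfl ht).symm

theorem continuousWithinAt_Ici_fCA (hα : 0 ≤ α) (hq0 : q 0 = 1)
    (hsuper : ∀ m n, q m * q n ≤ q (m + n + 1))
    (hsum : Summable fun i => (q i : ℝ) * α ^ (i + 1)) (hx : x ≠ 1) :
    ContinuousWithinAt (fCA α q) (Set.Ici x) x :=
  tendsto_fCA_of_eventually_floor_eq hα hq0 hsuper hsum hx fun _ =>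
    (eventually_nhdsWithin_of_eventually_nhds (eventually_ne_nhds hx)).and
      (eventually_floor_mul_eq_nhdsGE x (by positivity))

theorem continuousAt_fCA_of_not_dyadic (hα : 0 ≤ α) (hq0 : q 0 = 1)
    (hsuper : ∀ m n, q m * q n ≤ q (m + n + 1))
    (hsum : Summable fun i => (q i : ℝ) * α ^ (i + 1)) (hx : x ≠ 1)
    (hnd : ∀ (n : ℕ) (K : ℤ), x * 2 ^ n ≠ K) : ContinuousAt (fCA α q) x :=
  tendsto_fCA_of_eventually_floor_eq hα hq0 hsuper hsum hx fun n =>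
    (eventually_ne_nhds hx).and (eventually_floor_mul_eq_nhds (hnd n))

theorem continuousWithinAt_Iic_fCA_one (hα : 0 ≤ α) (hq0 : q 0 = 1)
    (hsuper : ∀ m n, q m * q n ≤ q (m + n + 1))
    (hQ : HasSum (fun i => (q i : ℝ) * α ^ (i + 1)) 1) :
    ContinuousWithinAt (fCA α q) (Set.Iic 1) 1 := by
  refine tendsto_of_forall_eventually_dist_le (tendsto_qTail (α := α) (q := q)) fun n => ?_
  filter_upwards [Ioc_mem_nhdsLE (show 1 - 1 / 2 ^ n < (1 : ℝ) by simp)] with y ⟨hy, hy1⟩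
  have hf1 : fCA α q 1 = 1 := if_pos rfl
  obtain rfl | hy1 := hy1.eq_or_lt
  · simpa using qTail_nonneg hα n
  rw [Real.dist_eq, fCA_of_ne_one hy1.ne, hf1]
  -- `1 = 1 / 2 ^ 0` is dyadic; just below it all the first digits are ones
  exact abs_fSeries_sub_one_le hα hq0 hsuper (binDigit_le_one y) hQ fun t ht htn =>
    binDigit_eq_one_of_left_of_dyadic (j := 0) (K := 1) (by simp) one_pos ht htn hy.le hy1

theorem continuousWithinAt_Iic_fCA_of_dyadic (hα : 0 ≤ α) (hq0 : q 0 = 1)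
    (hsuper : ∀ m n, q m * q n ≤ q (m + n + 1))
    (hQ : HasSum (fun i => (q i : ℝ) * α ^ (i + 1)) 1) {j : ℕ} {K : ℤ} (hj : 1 ≤ j)
    (hK : x * 2 ^ j = K) (hKodd : Odd K) (hKpos : 0 < K) (hx : x < 1) :
    ContinuousWithinAt (fCA α q) (Set.Iic x) x := by
  set C := rWeight q (binDigit x) j * α ^ j
  have hg : Tendsto (fun n => qTail α q (n + j) + C * qTail α q n) atTop (𝓝 0) := by
    simpa using (tendsto_qTail.comp (tendsto_add_atTop_nat j)).add (tendsto_qTail.const_mul C)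
  refine tendsto_of_forall_eventually_dist_le hg fun n => ?_
  filter_upwards [Icc_mem_nhdsLE (show x - 1 / 2 ^ (n + j) < x by simp)] with y ⟨hy, hyx⟩
  obtain rfl | hyx := hyx.eq_or_lt
  · have := mul_nonneg (mul_nonneg (rWeight_nonneg q (binDigit y) j) (pow_nonneg hα j))
      (qTail_nonneg (q := q) hα n)
    simpa using add_nonneg (qTail_nonneg hα (n + j)) this
  obtain ⟨J, rfl⟩ : ∃ J, j = J + 1 := ⟨j - 1, by omega⟩
  have hjm : J + 1 ≤ n + (J + 1) := by omega
  rw [Real.dist_eq, fCA_of_ne_one (hyx.trans hx).ne, fCA_of_ne_one hx.ne]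
  simpa using abs_fSeries_sub_le_of_dyadic hα hq0 hsuper (binDigit_le_one y) hQ hj hjm
    (fun t _ ht => (binDigit_eq_of_floor_eq
      (floor_mul_two_pow_eq_of_left_of_dyadic hK hKodd hjm hy hyx) (by omega)).symm)
    (binDigit_eq_one_of_dyadic hK hKodd hKpos) (fun t ht => binDigit_eq_zero_of_dyadic hK ht)
    (binDigit_eq_zero_of_left_of_dyadic hK hKodd hjm hy hyx)
    (fun t ht htm => binDigit_eq_one_of_left_of_dyadic hK hKpos ht htm hy hyx)

end Continuity

theorem fCA_continuousOn_general (α : ℝ) (hα0 : 0 < α)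
    (q : ℕ → ℕ) (hq0 : q 0 = 1) (hqpos : ∀ s, 0 < q s)
    (hqb : ∀ s₁ s₂ : ℕ, 0 < s₁ → 0 < s₂ →
      q s₁ * q (s₂ - 1) < q (s₁ + s₂) ∧ q (s₁ + s₂) ≤ q s₁ * q s₂)
    (hqd : ∑' j : ℕ, (q j : ℝ) * α ^ (j + 1) = 1)
    : ContinuousOn (fCA α q) (Set.Icc 0 1) := by
  have hsuper := mul_le_of_mul_pred_lt hq0 (hqpos 1) fun s₁ s₂ h₁ h₂ => (hqb s₁ s₂ h₁ h₂).1
  have hQ : HasSum (fun j => (q j : ℝ) * α ^ (j + 1)) 1 := by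
    by_cases hs : Summable fun j => (q j : ℝ) * α ^ (j + 1)
    · exact hqd ▸ hs.hasSum
    · simp [tsum_eq_zero_of_not_summable hs] at hqd
  rintro x ⟨hx0, hx1⟩
  obtain rfl | hx1 := hx1.eq_or_lt
  · exact (continuousWithinAt_Iic_fCA_one hα0.le hq0 hsuper hQ).mono fun y hy => hy.2
  have hright := continuousWithinAt_Ici_fCA hα0.le hq0 hsuper hQ.summable hx1.ne
  obtain rfl | hx0 := hx0.eq_or_lt
  · exact hright.mono fun y hy => hy.1
  refine ContinuousAt.continuousWithinAt ?_
  by_cases hdyadic : ∃ (n : ℕ) (K : ℤ), x * 2 ^ n = K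
  · obtain ⟨n, K, hK⟩ := hdyadic
    obtain ⟨j, K, hj, hK, hKodd, hKpos⟩ := exists_odd_of_mul_two_pow_eq hx0 hx1 hK
    exact continuousAt_iff_continuous_left_right.2
      ⟨continuousWithinAt_Iic_fCA_of_dyadic hα0.le hq0 hsuper hQ hj hK hKodd hKpos hx1, hright⟩
  · simp only [not_exists] at hdyadic
    exact continuousAt_fCA_of_not_dyadic hα0.le hq0 hsuper hQ.summable hx1.ne hdyadic

/-- Part (ii) of the singularity criterion: f is continuous on [0,1]. -/
theorem fCA_continuousOn (α : ℝ) (hα0 : 0 < α) (hα : α < 1/2)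
    (q : ℕ → ℕ) (hq0 : q 0 = 1) (hqpos : ∀ s, 0 < q s)
    (hqb : ∀ s₁ s₂ : ℕ, 0 < s₁ → 0 < s₂ →
      q s₁ * q (s₂ - 1) < q (s₁ + s₂) ∧ q (s₁ + s₂) ≤ q s₁ * q s₂)
    (hqc : ∀ s : ℕ, 0 < s →
      (q (s + 1) : ℝ) * α ^ (s + 2) < (q s : ℝ) * α ^ (s + 1) ∧
      (q s : ℝ) * α ^ (s + 1) < ∑' j : ℕ, (q (s + 1 + j) : ℝ) * α ^ (s + 2 + j))
    (hqd : ∑' j : ℕ, (q j : ℝ) * α ^ (j + 1) = 1)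
    : ContinuousOn (fCA α q) (Set.Icc 0 1) :=
  fCA_continuousOn_general α hα0 q hq0 hqpos hqb hqd
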